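/- Let J be a strongly stable monomial ideal in A[x₀,…,xₙ] over a commutative noetherian ring A and F_J a J-marked set. Then F_J is a J-marked basis if and only if for every f_α ∈ F_J (with head term x^α of degree d) and every variable x_i with i > min x^α, the polynomial x_i f_α lies in the A-span ⟨F_J^{(d+1)}⟩; equivalently, if and only if every Eliahou–Kervaire S-polynomial S^{EK}(f_α, f_β) = x_i f_α − x^ν f_β (where i > min x^α and x_i x^α = x^β ∗_J x^ν with x^β ∈ B_J) lies in ⟨F_J^{(s)}⟩ for s its degree. -/

import Mathlib

open MvPolynomial

noncomputable section

/-- Exponent vectors of monomials in the variables `x₀, …, xₙ`. -/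
abbrev Mon (n : ℕ) : Type := Fin (n + 1) →₀ ℕ

namespace MarkedFamilies

variable {n : ℕ}

/-- The total degree of a monomial given by its exponent vector. -/
def mdeg (α : Mon n) : ℕ := α.sum fun _ e => e

/-- A monomial ideal, identified with its (upward closed) set of monomials. -/
def IsMonomialIdeal (J : Set (Mon n)) : Prop := ∀ α ∈ J, ∀ δ : Mon n, α + δ ∈ J

/-- A strongly stable monomial ideal: a monomial ideal such that for every monomial
`x^α ∈ J`, every variable `x_j` dividing `x^α` and every `i > j`, `(x_i/x_j)·x^α ∈ J`. -/
def IsStronglyStable (J : Set (Mon n)) : Prop :=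
  IsMonomialIdeal J ∧
    ∀ α ∈ J, ∀ j : Fin (n + 1), α j ≠ 0 → ∀ i : Fin (n + 1), j < i →
      α - Finsupp.single j 1 + Finsupp.single i 1 ∈ J

/-- The minimal monomial generators `B_J` of a monomial ideal `J`. -/
def minGens (J : Set (Mon n)) : Set (Mon n) :=
  {α | α ∈ J ∧ ∀ j : Fin (n + 1), α j ≠ 0 → α - Finsupp.single j 1 ∉ J}

/-- `min x^γ ≥ max x^δ`: every variable dividing `x^γ` is at least every variable
dividing `x^δ` (vacuously true when either monomial is `1`). -/
def minGeMax (γ δ : Mon n) : Prop := ∀ i ∈ γ.support, ∀ j ∈ δ.support, j ≤ i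

/-- Lexicographic order induced by `x₀ < ⋯ < xₙ`: `a <ₗₑₓ b` iff at the largest
index where they differ, `a` has the smaller exponent. -/
def lexLt (a b : Mon n) : Prop :=
  ∃ i : Fin (n + 1), a i < b i ∧ ∀ j : Fin (n + 1), i < j → a j = b j

/-- A saturated strongly stable ideal: strongly stable and no minimal generator is
divisible by `x₀`. -/
def IsSaturatedSS (J : Set (Mon n)) : Prop :=
  IsStronglyStable J ∧ ∀ α ∈ minGens J, α 0 = 0

/-- The truncation `J_{≥ t}`: the (monomial) ideal generated by the monomials of `J`
of degree at least `t`. -/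
def truncSet (J : Set (Mon n)) (t : ℕ) : Set (Mon n) := {α | α ∈ J ∧ t ≤ mdeg α}

section Ring

variable (A : Type*) [CommRing A]

/-- `⟨N(J)⟩`: the `A`-span of the monomials not in `J`. -/
def nSpan (J : Set (Mon n)) : Submodule A (MvPolynomial (Fin (n + 1)) A) :=
  Submodule.span A {p | ∃ β : Mon n, β ∉ J ∧ p = monomial β (1 : A)}

/-- `⟨N(J)_s⟩`: the `A`-span of the monomials of degree `s` not in `J`. -/
def nSpanDeg (J : Set (Mon n)) (s : ℕ) : Submodule A (MvPolynomial (Fin (n + 1)) A) :=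
  Submodule.span A {p | ∃ β : Mon n, β ∉ J ∧ mdeg β = s ∧ p = monomial β (1 : A)}

/-- `I_s`: the degree-`s` homogeneous component of an ideal, as an `A`-submodule. -/
def idealDeg (I : Ideal (MvPolynomial (Fin (n + 1)) A)) (s : ℕ) :
    Submodule A (MvPolynomial (Fin (n + 1)) A) :=
  Submodule.restrictScalars A I ⊓ homogeneousSubmodule (Fin (n + 1)) A s

/-- `I_{≥ s}`: the ideal `⊕_{t ≥ s} I_t`, i.e. the ideal generated by the homogeneous
elements of `I` of degree at least `s`. -/
def idealGeq (I : Ideal (MvPolynomial (Fin (n + 1)) A)) (s : ℕ) :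
    Ideal (MvPolynomial (Fin (n + 1)) A) :=
  Ideal.span {f | f ∈ I ∧ ∃ t : ℕ, s ≤ t ∧ f.IsHomogeneous t}

/-- A homogeneous ideal of the polynomial ring. -/
def IsHomogIdeal (I : Ideal (MvPolynomial (Fin (n + 1)) A)) : Prop :=
  ∀ f ∈ I, ∀ s : ℕ, homogeneousComponent s f ∈ I

variable {A}

/-- A `J`-marked set: a family assigning to each minimal generator `x^α ∈ B_J` a
polynomial `f_α = x^α − Σ_{x^β ∈ N(J)_{|α|}} c_{αβ} x^β`. -/
def IsMarkedSet (J : Set (Mon n)) (F : Mon n → MvPolynomial (Fin (n + 1)) A) : Prop :=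
  ∀ α ∈ minGens J, (F α).coeff α = 1 ∧
    ∀ β ∈ (F α).support, β ≠ α → β ∉ J ∧ mdeg β = mdeg α

/-- The ideal generated by a marked set. -/
def markedIdeal (J : Set (Mon n)) (F : Mon n → MvPolynomial (Fin (n + 1)) A) :
    Ideal (MvPolynomial (Fin (n + 1)) A) :=
  Ideal.span (F '' minGens J)

/-- A `J`-marked basis: a `J`-marked set `F` with `A[x] = (F) ⊕ ⟨N(J)⟩` as `A`-modules. -/
def IsMarkedBasis (J : Set (Mon n)) (F : Mon n → MvPolynomial (Fin (n + 1)) A) : Prop :=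
  IsMarkedSet J F ∧
    IsCompl (Submodule.restrictScalars A (markedIdeal J F)) (nSpan A J)

/-- `F_J^{(s)} = { x^δ f_α : deg(x^δ f_α) = s, min x^α ≥ max x^δ }`. -/
def FSet (J : Set (Mon n)) (F : Mon n → MvPolynomial (Fin (n + 1)) A) (s : ℕ) :
    Set (MvPolynomial (Fin (n + 1)) A) :=
  {p | ∃ α δ : Mon n, α ∈ minGens J ∧ mdeg α + mdeg δ = s ∧ minGeMax α δ ∧
        p = monomial δ (1 : A) * F α}

/-- `F̂_J^{(s)} = { x^δ f_α : deg(x^δ f_α) = s, min x^α < max x^δ }`. -/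
def FHatSet (J : Set (Mon n)) (F : Mon n → MvPolynomial (Fin (n + 1)) A) (s : ℕ) :
    Set (MvPolynomial (Fin (n + 1)) A) :=
  {p | ∃ α δ : Mon n, α ∈ minGens J ∧ mdeg α + mdeg δ = s ∧ ¬ minGeMax α δ ∧
        p = monomial δ (1 : A) * F α}

/-- `SF_J^{(s)} = { x^δ f_β − x^γ f_α : x^δ f_β ∈ F̂_J^{(s)}, x^γ f_α ∈ F_J^{(s)},
x^δ x^β = x^γ x^α }`. -/
def SFSet (J : Set (Mon n)) (F : Mon n → MvPolynomial (Fin (n + 1)) A) (s : ℕ) :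
    Set (MvPolynomial (Fin (n + 1)) A) :=
  {p | ∃ α γ β δ : Mon n, α ∈ minGens J ∧ β ∈ minGens J ∧
      mdeg β + mdeg δ = s ∧ ¬ minGeMax β δ ∧
      mdeg α + mdeg γ = s ∧ minGeMax α γ ∧
      δ + β = γ + α ∧ p = monomial δ (1 : A) * F β - monomial γ (1 : A) * F α}

/-- A `(J_s)`-marked set: one marked polynomial `f̃_γ = x^γ − Σ_{x^δ ∈ N(J)_s} d_{γδ} x^δ`
for each monomial `x^γ` of degree `s` in `J`. -/
def IsTruncMarkedSet (J : Set (Mon n)) (s : ℕ)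
    (f : Mon n → MvPolynomial (Fin (n + 1)) A) : Prop :=
  ∀ γ : Mon n, γ ∈ J → mdeg γ = s →
    (f γ).coeff γ = 1 ∧ ∀ β ∈ (f γ).support, β ≠ γ → β ∉ J ∧ mdeg β = s

end Ring

/-- Index set for the generic coefficients `C_{αβ}` (`x^α ∈ B_J`, `x^β ∈ N(J)_{|α|}`). -/
abbrev CIdx (J : Set (Mon n)) : Type :=
  {p : Mon n × Mon n // p.1 ∈ minGens J ∧ p.2 ∉ J ∧ mdeg p.2 = mdeg p.1}

/-- The coefficient ring `ℤ[C]`. -/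
abbrev ZC (J : Set (Mon n)) : Type := MvPolynomial (CIdx J) ℤ

/-- The generic `J`-marked set `𝓕_J = { x^α − Σ_{x^β ∈ N(J)_{|α|}} C_{αβ} x^β }`
in `ℤ[C][x]`, characterized through its coefficients. -/
def IsGenericMarkedSet (J : Set (Mon n))
    (𝓕 : Mon n → MvPolynomial (Fin (n + 1)) (ZC J)) : Prop :=
  ∀ α : Mon n, ∀ hα : α ∈ minGens J,
    (𝓕 α).coeff α = 1 ∧
    (∀ γ : Mon n, ∀ hγ : γ ∉ J ∧ mdeg γ = mdeg α,
      (𝓕 α).coeff γ = - MvPolynomial.X ⟨(α, γ), hα, hγ.1, hγ.2⟩) ∧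
    (∀ γ : Mon n, γ ≠ α → ¬(γ ∉ J ∧ mdeg γ = mdeg α) → (𝓕 α).coeff γ = 0)

/-- The ideal `𝔦_J ⊆ ℤ[C]` generated by the `x`-coefficients of all polynomials
in `(𝓕_J) ∩ ⟨N(J)⟩`. -/
def markedCoeffIdeal (J : Set (Mon n))
    (𝓕 : Mon n → MvPolynomial (Fin (n + 1)) (ZC J)) : Ideal (ZC J) :=
  Ideal.span {c : ZC J | ∃ p : MvPolynomial (Fin (n + 1)) (ZC J),
    p ∈ markedIdeal J 𝓕 ∧ p ∈ nSpan (ZC J) J ∧ ∃ γ : Mon n, p.coeff γ = c}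

/-- The evaluation homomorphism `φ_{F_J} : ℤ[C] → A`, `C_{αβ} ↦ c_{αβ}`, associated to a
`J`-marked set `F` with `f_α = x^α − Σ c_{αβ} x^β` (so `c_{αβ} = −(F α).coeff β`). -/
noncomputable def evalHom (J : Set (Mon n)) {A : Type*} [CommRing A]
    (F : Mon n → MvPolynomial (Fin (n + 1)) A) : ZC J →+* A :=
  MvPolynomial.eval₂Hom (Int.castRingHom A) fun p => -((F p.val.1).coeff p.val.2)

/-- `x^γ` is the `σ`-leading monomial of `g` (with nonzero leading coefficient). -/
def IsLeadingMon {A : Type*} [CommRing A] (σlt : Mon n → Mon n → Prop)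
    (g : MvPolynomial (Fin (n + 1)) A) (γ : Mon n) : Prop :=
  g.coeff γ ≠ 0 ∧ ∀ δ ∈ g.support, δ ≠ γ → σlt δ γ

/-- `LC(I, x^γ)`: the set of leading coefficients at `x^γ` of elements of `I`,
together with `0`. -/
def LCset {A : Type*} [CommRing A] (σlt : Mon n → Mon n → Prop)
    (I : Ideal (MvPolynomial (Fin (n + 1)) A)) (γ : Mon n) : Set A :=
  {a | ∃ g ∈ I, IsLeadingMon σlt g γ ∧ g.coeff γ = a} ∪ {0}

/-- A monic ideal with respect to the term ordering `σ`. -/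
def IsMonicIdeal {A : Type*} [CommRing A] (σlt : Mon n → Mon n → Prop)
    (I : Ideal (MvPolynomial (Fin (n + 1)) A)) : Prop :=
  ∀ γ : Mon n, LCset σlt I γ = {0} ∨ LCset σlt I γ = Set.univ

/-- The set of `σ`-leading monomials of elements of `I` (i.e. `in_σ(I)`,
identified with its set of monomials). -/
def leadingMons {A : Type*} [CommRing A] (σlt : Mon n → Mon n → Prop)
    (I : Ideal (MvPolynomial (Fin (n + 1)) A)) : Set (Mon n) :=
  {γ | ∃ g ∈ I, IsLeadingMon σlt g γ}

end MarkedFamilies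
end

/-!
Every monomial `x^η ∈ J` reduces modulo `⟨F_J^{(|η|)}⟩` into `⟨N(J)⟩`: writing
`x^η = x^α ∗_J x^δ`, replace `x^η` by `x^δ f_α` minus the tail terms `x^δ x^β` with
`x^β ∈ N(J)`; each of these lies in `N(J)` or is again some `x^α' ∗_J x^δ'`, now with `x^δ'`
lexicographically smaller than `x^δ`. Hence `(F_J) + ⟨N(J)⟩ = A[x]` for every marked set.
On the other hand the products `x^δ f_α` with `min x^α ≥ max x^δ` have pairwise distinct heads
`x^α x^δ ∈ J`, and the head of the one with lex-largest `x^δ` cannot cancel in a linear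
combination, so `⟨⋃ₛ F_J^{(s)}⟩ ∩ ⟨N(J)⟩ = 0`.

So `F_J` is a marked basis iff `⟨⋃ₛ F_J^{(s)}⟩` is an ideal, i.e. is stable under every `x_i`.
For `x_i x^δ f_α` this is automatic unless `i > min x^α`; then it equals `x^δ (x_i f_α)`, and
the hypothesis on `x_i f_α` suffices by induction on `i`, because `x^δ` only involves variables
smaller than `x_i`. An Eliahou–Kervaire S-polynomial differs from `x_i f_α` by the element
`x^ν f_β` of `F_J^{(|α|+1)}`.
-/

namespace MarkedFamilies

variable {n : ℕ}

section Monomials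

lemma mdeg_eq_degree (α : Mon n) : mdeg α = α.degree := rfl

lemma mdeg_add (α β : Mon n) : mdeg (α + β) = mdeg α + mdeg β := map_add Finsupp.degree α β

lemma mdeg_single (i : Fin (n + 1)) (k : ℕ) : mdeg (Finsupp.single i k) = k :=
  Finsupp.degree_single i k

lemma minGeMax_zero_right (α : Mon n) : minGeMax α 0 := by
  simp [minGeMax]

lemma exists_lt_of_not_minGeMax_add_single {α δ : Mon n} {i : Fin (n + 1)}
    (h : minGeMax α δ) (hi : ¬ minGeMax α (δ + Finsupp.single i 1)) :
    ∃ a, α a ≠ 0 ∧ a < i := by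
  simp only [minGeMax, Finsupp.mem_support_iff, not_forall, not_le] at h hi
  obtain ⟨a, ha, b, hb, hab⟩ := hi
  have hbi : b = i := by
    by_contra hne
    simp only [Finsupp.add_apply, Finsupp.single_apply, if_neg (Ne.symm hne), add_zero] at hb
    exact absurd (h a ha b hb) (not_le.mpr hab)
  exact ⟨a, ha, hbi ▸ hab⟩

/-- `lexLt` is `Finsupp.Lex` with the order of the variables reversed. -/
def lexEmb (a : Mon n) : Lex ((Fin (n + 1))ᵒᵈ →₀ ℕ) :=
  toLex (Finsupp.equivMapDomain OrderDual.toDual a)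

lemma lexEmb_lt_iff {a b : Mon n} : lexEmb a < lexEmb b ↔ lexLt a b := by
  rw [Finsupp.Lex.lt_iff]
  constructor
  · rintro ⟨i, hji, hlt⟩
    exact ⟨OrderDual.ofDual i, hlt, fun j hj => hji (OrderDual.toDual j) hj⟩
  · rintro ⟨i, hlt, hji⟩
    exact ⟨OrderDual.toDual i, fun j hj => hji (OrderDual.ofDual j) hj, hlt⟩

lemma lexEmb_injective : Function.Injective (lexEmb (n := n)) := fun _ _ h =>
  Finsupp.ext fun i => by
    have := congrArg (fun f : Lex ((Fin (n + 1))ᵒᵈ →₀ ℕ) => ofLex f (OrderDual.toDual i)) h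
    exact this

lemma lexLt_trichotomy (a b : Mon n) : lexLt a b ∨ a = b ∨ lexLt b a := by
  simpa only [← lexEmb_lt_iff, lexEmb_injective.eq_iff] using lt_trichotomy (lexEmb a) (lexEmb b)

lemma wellFounded_lexLt : WellFounded (lexLt (n := n)) :=
  Subrelation.wf (fun h => lexEmb_lt_iff.mpr h)
    (InvImage.wf lexEmb Finsupp.Lex.wellFoundedLT_of_finite.wf)

end Monomials

section Factorization

variable {J : Set (Mon n)}

lemma IsStronglyStable.sub_single_mem_of_le (hJ : IsStronglyStable J) {η : Mon n}
    {j m : Fin (n + 1)} (hj : η j ≠ 0) (hjJ : η - Finsupp.single j 1 ∈ J) (hm : η m ≠ 0)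
    (hmj : m ≤ j) :
    η - Finsupp.single m 1 ∈ J := by
  rcases hmj.eq_or_lt with rfl | hmj
  · exact hjJ
  have hm' : (η - Finsupp.single j 1 : Mon n) m ≠ 0 := by
    rwa [Finsupp.tsub_apply, Finsupp.single_eq_of_ne' hmj.ne', Nat.sub_zero]
  convert hJ.2 _ hjJ m hm' j hmj using 1
  ext k
  simp only [Finsupp.add_apply, Finsupp.tsub_apply, Finsupp.single_apply]
  rcases eq_or_ne m k with rfl | hmk
  · simp [hmj.ne']
  · rcases eq_or_ne j k with rfl | hjk
    · simp only [if_neg hmk, if_true]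
      omega
    · simp [hmk, hjk]

/-- The decomposition `x^η = x^α ∗_J x^δ`: peel off the smallest variable of `η` as long as
the quotient stays in `J`; strong stability makes the result a minimal generator. -/
theorem IsStronglyStable.exists_factorization (hJ : IsStronglyStable J) {η : Mon n}
    (hη : η ∈ J) : ∃ α δ, α ∈ minGens J ∧ minGeMax α δ ∧ α + δ = η := by
  induction η using WellFoundedLT.induction with
  | _ η ih =>
  by_cases hmin : η ∈ minGens J
  · exact ⟨η, 0, hmin, minGeMax_zero_right η, add_zero η⟩
  obtain ⟨j, hj, hjJ⟩ : ∃ j, η j ≠ 0 ∧ η - Finsupp.single j 1 ∈ J := by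
    simpa [minGens, hη] using hmin
  have hsupp : η.support.Nonempty := ⟨j, Finsupp.mem_support_iff.mpr hj⟩
  set m := η.support.min' hsupp
  have hm : η m ≠ 0 := Finsupp.mem_support_iff.mp (η.support.min'_mem hsupp)
  have hm_le : ∀ k, η k ≠ 0 → m ≤ k := fun k hk =>
    η.support.min'_le k (Finsupp.mem_support_iff.mpr hk)
  have hle : Finsupp.single m 1 ≤ η := Finsupp.single_le_iff.mpr (Nat.one_le_iff_ne_zero.mpr hm)
  have hlt : η - Finsupp.single m 1 < η :=
    lt_of_le_of_ne tsub_le_self fun h => by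
      have := DFunLike.congr_fun h m
      simp only [Finsupp.tsub_apply, Finsupp.single_eq_same] at this
      omega
  obtain ⟨α, δ, hα, hαδ, heq⟩ := ih _ hlt (hJ.sub_single_mem_of_le hj hjJ hm (hm_le j hj))
  refine ⟨α, δ + Finsupp.single m 1, hα, ?_, by rw [← add_assoc, heq, tsub_add_cancel_of_le hle]⟩
  intro a ha b hb
  rcases Finset.mem_union.mp (Finsupp.support_add hb) with hb | hb
  · exact hαδ a ha b hb
  · rw [Finset.mem_singleton.mp (Finsupp.support_single_subset hb)]
    apply hm_le
    have := DFunLike.congr_fun heq a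
    simp only [Finsupp.add_apply, Finsupp.tsub_apply] at this
    have := Finsupp.mem_support_iff.mp ha
    omega

lemma le_or_le_of_add_eq_add {α δ α' δ' : Mon n} (h : minGeMax α δ) (h' : minGeMax α' δ')
    (heq : α + δ = α' + δ') : α ≤ α' ∨ α' ≤ α := by
  by_contra! hne
  simp only [Finsupp.le_def, not_forall, not_le] at hne
  obtain ⟨⟨j, hj⟩, ⟨i, hi⟩⟩ := hne
  have hpt : ∀ k, α k + δ k = α' k + δ' k := fun k => by
    simpa using DFunLike.congr_fun heq k
  have hij : j ≤ i := h' i (Finsupp.mem_support_iff.mpr (by omega)) j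
    (Finsupp.mem_support_iff.mpr (by have := hpt j; omega))
  have hji : i ≤ j := h j (Finsupp.mem_support_iff.mpr (by omega)) i
    (Finsupp.mem_support_iff.mpr (by have := hpt i; omega))
  have := le_antisymm hij hji
  subst this
  omega

lemma eq_of_le_of_mem_minGens (hJ : IsMonomialIdeal J) {α α' : Mon n} (hα : α ∈ minGens J)
    (hα' : α' ∈ J) (hle : α' ≤ α) : α' = α := by
  by_contra hne
  obtain ⟨j, hj⟩ : ∃ j, α' j < α j := by
    by_contra! h
    exact hne (le_antisymm hle h)
  have hle' : α' ≤ α - Finsupp.single j 1 := fun k => by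
    simp only [Finsupp.tsub_apply, Finsupp.single_apply]
    have := hle k
    split_ifs with h <;> [subst h; skip] <;> omega
  refine hα.2 j (by omega) ?_
  rw [← add_tsub_cancel_of_le hle']
  exact hJ α' hα' _

theorem factorization_unique (hJ : IsMonomialIdeal J) {α δ α' δ' : Mon n}
    (hα : α ∈ minGens J) (hα' : α' ∈ minGens J) (h : minGeMax α δ) (h' : minGeMax α' δ')
    (heq : α + δ = α' + δ') : α = α' ∧ δ = δ' := by
  have hαα' : α = α' := by
    rcases le_or_le_of_add_eq_add h h' heq with hle | hle
    · exact eq_of_le_of_mem_minGens hJ hα' hα.1 hle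
    · exact (eq_of_le_of_mem_minGens hJ hα hα'.1 hle).symm
  subst hαα'
  exact ⟨rfl, add_left_cancel heq⟩

/-- The termination measure of the reduction: if `x^δ x^β` with `x^β ∈ N(J)` is rewritten as
`x^α' ∗_J x^δ'`, the multiplier strictly decreases lexicographically. -/
theorem lexLt_of_add_eq_add_of_notMem (hJ : IsMonomialIdeal J) {α' δ' δ β : Mon n}
    (hβ : β ∉ J) (hα' : α' ∈ J) (hmm : minGeMax α' δ') (heq : α' + δ' = δ + β) :
    lexLt δ' δ := by
  have hpt : ∀ k, α' k + δ' k = δ k + β k := fun k => by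
    simpa using DFunLike.congr_fun heq k
  rcases lexLt_trichotomy δ' δ with hlt | rfl | ⟨u, hu, hgt⟩
  · exact hlt
  · exact absurd ((add_right_cancel (heq.trans (add_comm _ _))) ▸ hα') hβ
  have hle : α' ≤ β := fun k => by
    rcases lt_trichotomy k u with hk | rfl | hk
    · by_contra hαk
      exact absurd (hmm k (Finsupp.mem_support_iff.mpr (by omega)) u
        (Finsupp.mem_support_iff.mpr (by omega))) (not_le.mpr hk)
    · have := hpt k; omega
    · have := hpt k; have := hgt k hk; omega
  refine absurd ?_ hβ
  rw [← add_tsub_cancel_of_le hle]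
  exact hJ α' hα' _

end Factorization

section Span

variable {σ A B : Type*} [CommSemiring A]

lemma mem_of_forall_monomial_mem (W : Submodule A (MvPolynomial σ A)) {p : MvPolynomial σ A}
    (h : ∀ η ∈ p.support, monomial η 1 ∈ W) : p ∈ W := by
  rw [p.as_sum]
  refine Submodule.sum_mem _ fun η hη => ?_
  rw [← mul_one (p.coeff η), ← smul_eq_mul, ← smul_monomial]
  exact W.smul_mem _ (h η hη)

variable [Semiring B] [Algebra A B]

def mulStabilizer (V : Submodule A B) : Subalgebra A B where
  carrier := {b | ∀ v ∈ V, b * v ∈ V}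
  mul_mem' ha hb v hv := by rw [mul_assoc]; exact ha _ (hb v hv)
  add_mem' ha hb v hv := by rw [add_mul]; exact V.add_mem (ha v hv) (hb v hv)
  algebraMap_mem' a v hv := by rw [← Algebra.smul_def]; exact V.smul_mem a hv

lemma mem_mulStabilizer_span_iff {s : Set B} {b : B} :
    b ∈ mulStabilizer (Submodule.span A s) ↔ ∀ v ∈ s, b * v ∈ Submodule.span A s := by
  refine ⟨fun h v hv => h v (Submodule.subset_span hv), fun h => ?_⟩
  have : Submodule.span A s ≤ (Submodule.span A s).comap (LinearMap.mulLeft A b) :=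
    Submodule.span_le.mpr h
  exact fun v hv => this hv

lemma monomial_one_mem_of_forall_X_mem (S : Subalgebra A (MvPolynomial σ A)) {δ : σ →₀ ℕ}
    (h : ∀ j ∈ δ.support, X j ∈ S) : monomial δ (1 : A) ∈ S := by
  rw [monomial_eq, C_1, one_mul]
  exact Subalgebra.prod_mem S fun j hj => Subalgebra.pow_mem S (h j hj) _

lemma mulStabilizer_eq_top_of_forall_X_mem {V : Submodule A (MvPolynomial σ A)}
    (h : ∀ i, X i ∈ mulStabilizer V) : mulStabilizer V = ⊤ := by
  rw [eq_top_iff, ← adjoin_range_X]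
  exact Algebra.adjoin_le (Set.range_subset_iff.mpr h)

end Span

section Ring

variable {A : Type*} [CommRing A] {J : Set (Mon n)} {F : Mon n → MvPolynomial (Fin (n + 1)) A}

lemma monomial_mem_nSpan {β : Mon n} (hβ : β ∉ J) : monomial β (1 : A) ∈ nSpan A J :=
  Submodule.subset_span ⟨β, hβ, rfl⟩

lemma coeff_eq_zero_of_mem_nSpan {p : MvPolynomial (Fin (n + 1)) A} (hp : p ∈ nSpan A J)
    {η : Mon n} (hη : η ∈ J) : p.coeff η = 0 := by
  induction hp using Submodule.span_induction with
  | mem x hx =>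
    obtain ⟨β, hβ, rfl⟩ := hx
    rw [coeff_monomial, if_neg]
    rintro rfl
    exact hβ hη
  | zero => exact coeff_zero η
  | add x y _ _ hx hy => rw [coeff_add, hx, hy, add_zero]
  | smul a x _ hx => rw [coeff_smul, hx, smul_zero]

lemma IsMarkedSet.isHomogeneous (hF : IsMarkedSet J F) {α : Mon n} (hα : α ∈ minGens J) :
    (F α).IsHomogeneous (mdeg α) := by
  intro β hβ
  change Finsupp.weight (fun _ => 1) β = mdeg α
  rw [← Finsupp.degree_eq_weight_one, ← mdeg_eq_degree]
  rcases eq_or_ne β α with rfl | hne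
  · rfl
  · exact ((hF α hα).2 β (mem_support_iff.mpr hβ) hne).2

lemma IsMarkedSet.notMem_and_mdeg_eq_of_mem_support_sub (hF : IsMarkedSet J F) {α β : Mon n}
    (hα : α ∈ minGens J) (hβ : β ∈ (F α - monomial α 1).support) :
    β ∉ J ∧ mdeg β = mdeg α := by
  have hne : β ≠ α := by
    rintro rfl
    simp [coeff_sub, (hF β hα).1] at hβ
  refine (hF α hα).2 β ?_ hne
  simpa [coeff_sub, coeff_monomial, Ne.symm hne] using hβ

lemma monomial_mul_mem_FSet {α : Mon n} (δ : Mon n) (hα : α ∈ minGens J) (hmm : minGeMax α δ) :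
    monomial δ (1 : A) * F α ∈ FSet J F (mdeg α + mdeg δ) :=
  ⟨α, δ, hα, rfl, hmm, rfl⟩

lemma span_FSet_le_markedIdeal (s : ℕ) :
    Submodule.span A (FSet J F s) ≤ (markedIdeal J F).restrictScalars A := by
  rw [Submodule.span_le]
  rintro p ⟨α, δ, hα, -, -, rfl⟩
  exact Ideal.mul_mem_left _ _ (Ideal.subset_span ⟨α, hα, rfl⟩)

theorem monomial_add_mem_span_FSet_sup_nSpan (hJ : IsStronglyStable J) (hF : IsMarkedSet J F)
    (δ : Mon n) : ∀ α ∈ minGens J, minGeMax α δ →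
      monomial (α + δ) (1 : A) ∈ Submodule.span A (FSet J F (mdeg α + mdeg δ)) ⊔ nSpan A J := by
  induction δ using wellFounded_lexLt.induction with
  | _ δ ih =>
  intro α hα hmm
  set W := Submodule.span A (FSet J F (mdeg α + mdeg δ)) ⊔ nSpan A J
  have htail : monomial δ 1 * (F α - monomial α 1) ∈ W := by
    refine mem_of_forall_monomial_mem (W.comap (LinearMap.mulLeft A (monomial δ 1)))
      fun β hβ => ?_
    obtain ⟨hβJ, hβdeg⟩ := hF.notMem_and_mdeg_eq_of_mem_support_sub hα hβ
    rw [Submodule.mem_comap, LinearMap.mulLeft_apply, monomial_mul, one_mul]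
    by_cases hδβ : δ + β ∈ J
    · obtain ⟨α', δ', hα', hmm', heq⟩ := hJ.exists_factorization hδβ
      have hdeg : mdeg α' + mdeg δ' = mdeg α + mdeg δ := by
        rw [← mdeg_add, heq, mdeg_add, hβdeg, add_comm]
      have := ih δ' (lexLt_of_add_eq_add_of_notMem hJ.1 hβJ hα'.1 hmm' heq) α' hα' hmm'
      rwa [hdeg, heq] at this
    · exact Submodule.mem_sup_right (monomial_mem_nSpan hδβ)
  have hsplit : monomial (α + δ) (1 : A) =
      monomial δ 1 * F α - monomial δ 1 * (F α - monomial α 1) := by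
    rw [mul_sub, monomial_mul, one_mul, add_comm δ α, sub_sub_cancel]
  rw [hsplit]
  exact W.sub_mem
    (Submodule.mem_sup_left (Submodule.subset_span (monomial_mul_mem_FSet δ hα hmm))) htail

theorem monomial_mem_span_FSet_sup_nSpan (hJ : IsStronglyStable J) (hF : IsMarkedSet J F)
    (η : Mon n) : monomial η (1 : A) ∈ Submodule.span A (FSet J F (mdeg η)) ⊔ nSpan A J := by
  by_cases hη : η ∈ J
  · obtain ⟨α, δ, hα, hmm, rfl⟩ := hJ.exists_factorization hη
    rw [mdeg_add]
    exact monomial_add_mem_span_FSet_sup_nSpan hJ hF δ α hα hmm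
  · exact Submodule.mem_sup_right (monomial_mem_nSpan hη)

theorem mem_span_FSet_sup_nSpan_of_isHomogeneous (hJ : IsStronglyStable J)
    (hF : IsMarkedSet J F) {p : MvPolynomial (Fin (n + 1)) A} {s : ℕ} (hp : p.IsHomogeneous s) :
    p ∈ Submodule.span A (FSet J F s) ⊔ nSpan A J :=
  mem_of_forall_monomial_mem _ fun η hη => by
    have hs : mdeg η = s := (hp.degree_eq_sum_deg_support hη).symm
    simpa only [hs] using monomial_mem_span_FSet_sup_nSpan hJ hF η

theorem codisjoint_markedIdeal_nSpan (hJ : IsStronglyStable J) (hF : IsMarkedSet J F) :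
    Codisjoint ((markedIdeal J F).restrictScalars A) (nSpan A J) := by
  rw [codisjoint_iff, eq_top_iff]
  intro p _
  exact mem_of_forall_monomial_mem _ fun η _ =>
    sup_le_sup_right (span_FSet_le_markedIdeal (mdeg η)) (nSpan A J)
      (monomial_mem_span_FSet_sup_nSpan hJ hF η)

lemma iUnion_FSet_eq_image : ⋃ s, FSet J F s =
    (fun p : Mon n × Mon n => monomial p.2 (1 : A) * F p.1) ''
      {p | p.1 ∈ minGens J ∧ minGeMax p.1 p.2} := by
  ext q
  simp only [Set.mem_iUnion, FSet, Set.mem_image, Set.mem_ofPred_eq, Prod.exists]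
  constructor
  · rintro ⟨s, α, δ, hα, -, hmm, rfl⟩
    exact ⟨α, δ, ⟨hα, hmm⟩, rfl⟩
  · rintro ⟨α, δ, ⟨hα, hmm⟩, rfl⟩
    exact ⟨_, α, δ, hα, rfl, hmm, rfl⟩

lemma coeff_monomial_mul_self (hF : IsMarkedSet J F) {α : Mon n} (δ : Mon n)
    (hα : α ∈ minGens J) : (monomial δ (1 : A) * F α).coeff (α + δ) = 1 := by
  rw [coeff_monomial_mul', if_pos le_add_self, one_mul, add_tsub_cancel_right]
  exact (hF α hα).1

lemma coeff_monomial_mul_eq_zero (hJ : IsMonomialIdeal J) (hF : IsMarkedSet J F)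
    {α δ α' δ' : Mon n} (hα : α ∈ minGens J) (hmm : minGeMax α δ) (hα' : α' ∈ minGens J)
    (hmm' : minGeMax α' δ') (hne : (α', δ') ≠ (α, δ)) (hlex : ¬ lexLt δ δ') :
    (monomial δ' (1 : A) * F α').coeff (α + δ) = 0 := by
  rw [coeff_monomial_mul']
  split_ifs with hle
  · rw [one_mul]
    by_contra hc
    have heq : δ' + (α + δ - δ') = α + δ := add_tsub_cancel_of_le hle
    by_cases hβ : α + δ - δ' = α'
    · rw [hβ, add_comm] at heq
      obtain ⟨rfl, rfl⟩ := factorization_unique hJ hα' hα hmm' hmm heq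
      exact hne rfl
    · have hβJ := ((hF α' hα').2 _ (mem_support_iff.mpr hc) hβ).1
      exact hlex (lexLt_of_add_eq_add_of_notMem hJ hβJ hα.1 hmm heq.symm)
  · rfl

theorem linearCombination_eq_zero_of_mem_nSpan (hJ : IsMonomialIdeal J) (hF : IsMarkedSet J F)
    {l : Mon n × Mon n →₀ A}
    (hl : l ∈ Finsupp.supported A A {p : Mon n × Mon n | p.1 ∈ minGens J ∧ minGeMax p.1 p.2})
    (hN : Finsupp.linearCombination A (fun p : Mon n × Mon n => monomial p.2 (1 : A) * F p.1) l
      ∈ nSpan A J) : l = 0 := by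
  by_contra hl0
  obtain ⟨p, hp, hmax⟩ := l.support.exists_max_image (fun p => lexEmb p.2)
    (Finsupp.support_nonempty_iff.mpr hl0)
  obtain ⟨hα, hmm⟩ := hl hp
  -- the term with the lex-largest multiplier is the only one containing its head `x^(α+δ) ∈ J`
  have hcoeff : (Finsupp.linearCombination A (fun p : Mon n × Mon n => monomial p.2 (1 : A) * F p.1)
      l).coeff (p.1 + p.2) = l p := by
    rw [Finsupp.linearCombination_apply, Finsupp.sum, coeff_sum, Finset.sum_eq_single p]
    · rw [coeff_smul, coeff_monomial_mul_self hF _ hα, smul_eq_mul, mul_one]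
    · intro q hq hqp
      obtain ⟨hα', hmm'⟩ := hl hq
      have hlex : ¬ lexLt p.2 q.2 := fun h => not_le.mpr (lexEmb_lt_iff.mpr h) (hmax q hq)
      rw [coeff_smul, coeff_monomial_mul_eq_zero hJ hF hα hmm hα' hmm' hqp hlex, smul_zero]
    · exact fun h => absurd hp h
  exact Finsupp.mem_support_iff.mp hp (hcoeff ▸ coeff_eq_zero_of_mem_nSpan hN (hJ _ hα.1 _))

theorem disjoint_span_FSet_nSpan (hJ : IsMonomialIdeal J) (hF : IsMarkedSet J F) :
    Disjoint (Submodule.span A (⋃ s, FSet J F s)) (nSpan A J) := by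
  rw [Submodule.disjoint_def]
  intro p hp hN
  rw [iUnion_FSet_eq_image, Finsupp.mem_span_image_iff_linearCombination] at hp
  obtain ⟨l, hl, rfl⟩ := hp
  rw [linearCombination_eq_zero_of_mem_nSpan hJ hF hl hN, map_zero]

def VarMulCriterion (J : Set (Mon n)) (F : Mon n → MvPolynomial (Fin (n + 1)) A) : Prop :=
  ∀ α ∈ minGens J, ∀ i : Fin (n + 1), (∃ j : Fin (n + 1), α j ≠ 0 ∧ j < i) →
    X i * F α ∈ Submodule.span A (FSet J F (mdeg α + 1))

def SPolyCriterion (J : Set (Mon n)) (F : Mon n → MvPolynomial (Fin (n + 1)) A) : Prop :=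
  ∀ α ∈ minGens J, ∀ β ∈ minGens J, ∀ i : Fin (n + 1), ∀ ν : Mon n,
    (∃ j : Fin (n + 1), α j ≠ 0 ∧ j < i) → minGeMax β ν →
    Finsupp.single i 1 + α = β + ν →
    X i * F α - monomial ν (1 : A) * F β ∈ Submodule.span A (FSet J F (mdeg α + 1))

theorem VarMulCriterion.X_mem_mulStabilizer (h : VarMulCriterion J F) (i : Fin (n + 1)) :
    X i ∈ mulStabilizer (Submodule.span A (⋃ s, FSet J F s)) := by
  induction i using WellFoundedLT.induction with
  | _ i ih =>
  rw [mem_mulStabilizer_span_iff]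
  intro v hv
  obtain ⟨s, α, δ, hα, -, hmm, rfl⟩ := Set.mem_iUnion.mp hv
  by_cases hgood : minGeMax α (δ + Finsupp.single i 1)
  · have hX : X i * (monomial δ 1 * F α) = monomial (δ + Finsupp.single i 1) 1 * F α := by
      rw [X, ← mul_assoc, monomial_mul, one_mul, add_comm (Finsupp.single i 1) δ]
    rw [hX]
    exact Submodule.subset_span (Set.mem_iUnion.mpr ⟨_, monomial_mul_mem_FSet _ hα hgood⟩)
  -- `x_i` breaks `min x^α ≥ max x^δ`: the criterion covers `x_i f_α`, and `x^δ` only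
  -- involves variables smaller than `x_i`
  obtain ⟨a, ha, hai⟩ := exists_lt_of_not_minGeMax_add_single hmm hgood
  have hδ : monomial δ 1 ∈ mulStabilizer (Submodule.span A (⋃ s, FSet J F s)) :=
    monomial_one_mem_of_forall_X_mem _ fun j hj =>
      ih j ((hmm a (Finsupp.mem_support_iff.mpr ha) j hj).trans_lt hai)
  rw [mul_left_comm]
  exact hδ _ (Submodule.span_mono (Set.subset_iUnion _ _) (h α hα i ⟨a, ha, hai⟩))

theorem VarMulCriterion.markedIdeal_le (h : VarMulCriterion J F) :
    (markedIdeal J F).restrictScalars A ≤ Submodule.span A (⋃ s, FSet J F s) := by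
  have htop := mulStabilizer_eq_top_of_forall_X_mem h.X_mem_mulStabilizer
  intro p hp
  rw [Submodule.restrictScalars_mem] at hp
  induction hp using Submodule.span_induction with
  | mem q hq =>
    obtain ⟨α, hα, rfl⟩ := hq
    refine Submodule.subset_span (Set.mem_iUnion.mpr ⟨mdeg α + mdeg (0 : Mon n), ?_⟩)
    simpa using monomial_mul_mem_FSet (F := F) 0 hα (minGeMax_zero_right α)
  | zero => exact Submodule.zero_mem _
  | add x y _ _ hx hy => exact Submodule.add_mem _ hx hy
  | smul c x _ hx => exact (htop ▸ Algebra.mem_top : c ∈ mulStabilizer _) x hx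

theorem IsMarkedBasis.X_mul_mem_span_FSet (hJ : IsStronglyStable J) (hB : IsMarkedBasis J F)
    {α : Mon n} (hα : α ∈ minGens J) (i : Fin (n + 1)) :
    X i * F α ∈ Submodule.span A (FSet J F (mdeg α + 1)) := by
  have hhom : (X i * F α).IsHomogeneous (mdeg α + 1) := by
    simpa only [add_comm] using (isHomogeneous_X A i).mul (hB.1.isHomogeneous hα)
  obtain ⟨q, hq, r, hr, hqr⟩ :=
    Submodule.mem_sup.mp (mem_span_FSet_sup_nSpan_of_isHomogeneous hJ hB.1 hhom)
  have hrI : r ∈ (markedIdeal J F).restrictScalars A := by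
    rw [eq_sub_of_add_eq' hqr]
    exact Submodule.sub_mem _ (Ideal.mul_mem_left _ _ (Ideal.subset_span ⟨α, hα, rfl⟩))
      (span_FSet_le_markedIdeal _ hq)
  rw [← hqr, Submodule.disjoint_def.mp hB.2.disjoint r hrI hr, add_zero]
  exact hq

theorem isMarkedBasis_iff_varMulCriterion (hJ : IsStronglyStable J) (hF : IsMarkedSet J F) :
    IsMarkedBasis J F ↔ VarMulCriterion J F :=
  ⟨fun hB _ hα i _ => hB.X_mul_mem_span_FSet hJ hα i, fun h =>
    ⟨hF, (disjoint_span_FSet_nSpan hJ.1 hF).mono_left h.markedIdeal_le,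
      codisjoint_markedIdeal_nSpan hJ hF⟩⟩

lemma monomial_mul_mem_span_FSet_of_add_eq {α β ν : Mon n} {i : Fin (n + 1)}
    (hβ : β ∈ minGens J) (hmm : minGeMax β ν) (heq : Finsupp.single i 1 + α = β + ν) :
    monomial ν (1 : A) * F β ∈ Submodule.span A (FSet J F (mdeg α + 1)) := by
  have hdeg : mdeg β + mdeg ν = mdeg α + 1 := by
    rw [← mdeg_add, ← heq, mdeg_add, mdeg_single, add_comm]
  exact Submodule.subset_span (hdeg ▸ monomial_mul_mem_FSet ν hβ hmm)

theorem varMulCriterion_iff_sPolyCriterion (hJ : IsStronglyStable J) :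
    VarMulCriterion J F ↔ SPolyCriterion J F := by
  constructor
  · intro h α hα β hβ i ν hi hmm heq
    exact Submodule.sub_mem _ (h α hα i hi) (monomial_mul_mem_span_FSet_of_add_eq hβ hmm heq)
  · intro h α hα i hi
    obtain ⟨β, ν, hβ, hmm, heq⟩ :=
      hJ.exists_factorization (add_comm α _ ▸ hJ.1 α hα.1 (Finsupp.single i 1))
    rw [← sub_add_cancel (X i * F α) (monomial ν 1 * F β)]
    exact Submodule.add_mem _ (h α hα β hβ i ν hi hmm heq.symm)
      (monomial_mul_mem_span_FSet_of_add_eq hβ hmm heq.symm)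

end Ring

end MarkedFamilies

open MvPolynomial MarkedFamilies in
theorem stmt_15_general {n : ℕ} {A : Type*} [CommRing A]
    (J : Set (Mon n)) (hJ : IsStronglyStable J)
    (F : Mon n → MvPolynomial (Fin (n + 1)) A) (hF : IsMarkedSet J F) :
    (IsMarkedBasis J F ↔
      ∀ α ∈ minGens J, ∀ i : Fin (n + 1), (∃ j : Fin (n + 1), α j ≠ 0 ∧ j < i) →
        MvPolynomial.X i * F α ∈ Submodule.span A (FSet J F (mdeg α + 1))) ∧
    (IsMarkedBasis J F ↔
      ∀ α ∈ minGens J, ∀ β ∈ minGens J, ∀ i : Fin (n + 1), ∀ ν : Mon n,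
        (∃ j : Fin (n + 1), α j ≠ 0 ∧ j < i) → minGeMax β ν →
        Finsupp.single i 1 + α = β + ν →
        MvPolynomial.X i * F α - monomial ν (1 : A) * F β ∈
          Submodule.span A (FSet J F (mdeg α + 1))) :=
  ⟨isMarkedBasis_iff_varMulCriterion hJ hF,
    (isMarkedBasis_iff_varMulCriterion hJ hF).trans (varMulCriterion_iff_sPolyCriterion hJ)⟩

open MvPolynomial MarkedFamilies in
/-- Buchberger-type criterion: `F_J` is a marked basis iff
`x_i f_α ∈ ⟨F_J^{(deg α + 1)}⟩` for every `i > min x^α`, iff every Eliahou–Kervaire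
S-polynomial lies in `⟨F_J^{(s)}⟩`. -/
theorem stmt_15 {n : ℕ} {A : Type*} [CommRing A] [IsNoetherianRing A]
    (J : Set (Mon n)) (hJ : IsStronglyStable J)
    (F : Mon n → MvPolynomial (Fin (n + 1)) A) (hF : IsMarkedSet J F) :
    (IsMarkedBasis J F ↔
      ∀ α ∈ minGens J, ∀ i : Fin (n + 1), (∃ j : Fin (n + 1), α j ≠ 0 ∧ j < i) →
        MvPolynomial.X i * F α ∈ Submodule.span A (FSet J F (mdeg α + 1))) ∧
    (IsMarkedBasis J F ↔
      ∀ α ∈ minGens J, ∀ β ∈ minGens J, ∀ i : Fin (n + 1), ∀ ν : Mon n,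
        (∃ j : Fin (n + 1), α j ≠ 0 ∧ j < i) → minGeMax β ν →
        Finsupp.single i 1 + α = β + ν →
        MvPolynomial.X i * F α - monomial ν (1 : A) * F β ∈
          Submodule.span A (FSet J F (mdeg α + 1))) :=
  stmt_15_general J hJ F hF
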